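/- arXiv:math/0611814 — 2 statements merged into one kernel-verified Lean document; each statement's English description precedes it below -/
import Mathlib

section
/- Let S = A × (⊕_{i∈I} S_i) be a direct sum of a group A with a family of nonabelian simple groups S_i. If M is a minimal normal subgroup of S, then either M = S_ℓ for some ℓ ∈ I, or M is contained in A. -/
open scoped Pointwise

/-- Lemma 7: if `S = A ⊕ (⊕_{i ∈ I} S_i)` is an internal restricted direct
product of a subgroup `A` with a family of nonabelian simple subgroups `S_i`,
then every minimal normal subgroup `M` of `S` is either one of the `S_i`
or contained in `A`. -/
theorem minimal_normal_of_directSum_with_simple_factors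
    {Γ : Type*} [Group Γ] {I : Type*}
    (A : Subgroup Γ) (S : I → Subgroup Γ)
    (hA : A.Normal) (hS : ∀ i, (S i).Normal)
    (hsimple : ∀ i, IsSimpleGroup (S i))
    (hnonab : ∀ i, ∃ a ∈ S i, ∃ b ∈ S i, a * b ≠ b * a)
    (htop : A ⊔ (⨆ i, S i) = ⊤)
    (hdisjA : Disjoint A (⨆ i, S i))
    (hdisjS : ∀ i, Disjoint (S i) (A ⊔ ⨆ j ∈ {j | j ≠ i}, S j))
    (M : Subgroup Γ) (hM : M.Normal) (hMne : M ≠ ⊥)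
    (hmin : ∀ K : Subgroup Γ, K.Normal → K ≤ M → K = ⊥ ∨ K = M) :
    (∃ i, M = S i) ∨ M ≤ A := by
  classical
  -- elements of S i commute with elements of A
  have hSA_comm : ∀ i, ∀ x ∈ S i, ∀ a ∈ A, x * a = a * x := by
    intro i x hx a ha
    have hc : x * a * x⁻¹ * a⁻¹ ∈ S i ⊓ (A ⊔ ⨆ j ∈ {j | j ≠ i}, S j) := by
      refine Subgroup.mem_inf.mpr ⟨?_, ?_⟩
      · have h1 : a * x⁻¹ * a⁻¹ ∈ S i := (hS i).conj_mem x⁻¹ (inv_mem hx) a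
        have h2 : x * (a * x⁻¹ * a⁻¹) ∈ S i := mul_mem hx h1
        simpa [mul_assoc] using h2
      · have h1 : x * a * x⁻¹ ∈ A := hA.conj_mem a ha x
        exact (le_sup_left : A ≤ A ⊔ ⨆ j ∈ {j | j ≠ i}, S j) (mul_mem h1 (inv_mem ha))
    have h0 : x * a * x⁻¹ * a⁻¹ = 1 :=
      Subgroup.mem_bot.mp ((hdisjS i).le_bot hc)
    have hxa : x * a = (x * a * x⁻¹ * a⁻¹) * (a * x) := by group
    rw [h0, one_mul] at hxa
    exact hxa
  -- elements of distinct S i, S j commute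
  have hSS_comm : ∀ i j, j ≠ i → ∀ x ∈ S i, ∀ y ∈ S j, x * y = y * x := by
    intro i j hji x hx y hy
    have hc : x * y * x⁻¹ * y⁻¹ ∈ S i ⊓ (A ⊔ ⨆ j ∈ {j | j ≠ i}, S j) := by
      refine Subgroup.mem_inf.mpr ⟨?_, ?_⟩
      · have h1 : y * x⁻¹ * y⁻¹ ∈ S i := (hS i).conj_mem x⁻¹ (inv_mem hx) y
        have h2 : x * (y * x⁻¹ * y⁻¹) ∈ S i := mul_mem hx h1
        simpa [mul_assoc] using h2
      · have h1 : x * y * x⁻¹ ∈ S j := (hS j).conj_mem y hy x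
        have h2 : x * y * x⁻¹ * y⁻¹ ∈ S j := mul_mem h1 (inv_mem hy)
        have h3 : S j ≤ ⨆ k ∈ {k | k ≠ i}, S k := le_iSup₂ (f := fun k (_ : k ∈ {k | k ≠ i}) => S k) j hji
        exact (le_sup_right : (⨆ k ∈ {k | k ≠ i}, S k) ≤ A ⊔ ⨆ k ∈ {k | k ≠ i}, S k) (h3 h2)
    have h0 : x * y * x⁻¹ * y⁻¹ = 1 :=
      Subgroup.mem_bot.mp ((hdisjS i).le_bot hc)
    have hxa : x * y = (x * y * x⁻¹ * y⁻¹) * (y * x) := by group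
    rw [h0, one_mul] at hxa
    exact hxa
  -- trivial center of each S i
  have hcenter : ∀ i, ∀ x ∈ S i, (∀ y ∈ S i, x * y = y * x) → x = 1 := by
    intro i x hx hcomm
    haveI := hsimple i
    have hZ : Subgroup.center ↥(S i) = ⊥ := by
      rcases (inferInstance : (Subgroup.center ↥(S i)).Normal).eq_bot_or_eq_top with h | h
      · exact h
      · exfalso
        obtain ⟨a, ha, b, hb, hab⟩ := hnonab i
        have hmem : (⟨a, ha⟩ : ↥(S i)) ∈ Subgroup.center ↥(S i) := h ▸ Subgroup.mem_top _
        have h2 := Subgroup.mem_center_iff.mp hmem ⟨b, hb⟩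
        have h3 : b * a = a * b := congrArg Subtype.val h2
        exact hab h3.symm
    have hxZ : (⟨x, hx⟩ : ↥(S i)) ∈ Subgroup.center ↥(S i) := by
      rw [Subgroup.mem_center_iff]
      rintro ⟨y, hy⟩
      exact Subtype.ext (hcomm y hy).symm
    rw [hZ, Subgroup.mem_bot] at hxZ
    exact congrArg Subtype.val hxZ
  -- finite support
  have hfin : ∀ s ∈ (⨆ i, S i), ∃ F : Finset I, s ∈ ⨆ j ∈ F, S j := by
    intro s hs
    refine Subgroup.iSup_induction' (C := fun x _ => ∃ F : Finset I, x ∈ ⨆ j ∈ F, S j)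
      S ?_ ?_ ?_ hs
    · intro i x hx
      refine ⟨{i}, ?_⟩
      have : S i ≤ ⨆ j ∈ ({i} : Finset I), S j :=
        le_iSup₂ (f := fun j (_ : j ∈ ({i} : Finset I)) => S j) i (Finset.mem_singleton_self i)
      exact this hx
    · exact ⟨∅, one_mem _⟩
    · rintro x y hx hy ⟨F, hFx⟩ ⟨G, hGy⟩
      refine ⟨F ∪ G, mul_mem ?_ ?_⟩
      · have hle : (⨆ j ∈ F, S j) ≤ ⨆ j ∈ F ∪ G, S j :=
          biSup_mono fun i hi => Finset.mem_union_left _ hi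
        exact hle hFx
      · have hle : (⨆ j ∈ G, S j) ≤ ⨆ j ∈ F ∪ G, S j :=
          biSup_mono fun i hi => Finset.mem_union_right _ hi
        exact hle hGy
  -- key: centralizing elements of the direct sum are trivial
  have hkey : ∀ F : Finset I, ∀ s ∈ (⨆ j ∈ F, S j),
      s ∈ Subgroup.centralizer (⨆ i, S i : Subgroup Γ) → s = 1 := by
    intro F
    induction F using Finset.induction_on with
    | empty => intro s hs _; simpa using hs
    | @insert ℓ F hℓF ih =>
      intro s hs hscent
      haveI := hS ℓ
      have hsplit : (⨆ j ∈ insert ℓ F, S j) = S ℓ ⊔ ⨆ j ∈ F, S j := by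
        simp [Finset.mem_insert, iSup_or, iSup_sup_eq, iSup_iSup_eq_left]
      rw [hsplit] at hs
      have hs' : s ∈ ((S ℓ : Set Γ) * ((⨆ j ∈ F, S j : Subgroup Γ) : Set Γ)) := by
        rw [← Subgroup.normal_mul]; exact hs
      obtain ⟨u, hu, v, hv, huv⟩ := hs'
      -- v commutes with S ℓ
      have hvcent : v ∈ Subgroup.centralizer (S ℓ : Subgroup Γ) := by
        have hle : (⨆ j ∈ F, S j) ≤ Subgroup.centralizer (S ℓ : Subgroup Γ) := by
          refine iSup₂_le fun j hj => ?_
          intro x hxj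
          refine Subgroup.mem_centralizer_iff.mpr fun g hg => ?_
          exact hSS_comm ℓ j (by rintro rfl; exact hℓF hj) g hg x hxj
        exact hle hv
      have hscent' : s ∈ Subgroup.centralizer (S ℓ : Subgroup Γ) := by
        refine Subgroup.centralizer_le ?_ hscent
        exact SetLike.coe_subset_coe.mpr (le_iSup S ℓ)
      have hucent : u ∈ Subgroup.centralizer (S ℓ : Subgroup Γ) := by
        have : u = s * v⁻¹ := by rw [← huv]; group
        rw [this]; exact mul_mem hscent' (inv_mem hvcent)
      have hu1 : u = 1 := by
        refine hcenter ℓ u hu fun y hy => ?_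
        exact (Subgroup.mem_centralizer_iff.mp hucent y hy).symm
      have hsv : s = v := by rw [← huv, hu1]; simp
      rw [hsv]
      exact ih v hv (hsv ▸ hscent)
  -- main case split
  by_cases hcase : ∃ i, M ≤ S i
  · left
    obtain ⟨i, hMS⟩ := hcase
    haveI := hsimple i
    have hn : (M.subgroupOf (S i)).Normal := hM.subgroupOf (S i)
    rcases (hsimple i).eq_bot_or_eq_top_of_normal _ hn with h | h
    · exfalso
      have hd := Subgroup.subgroupOf_eq_bot.mp h
      refine hMne (le_bot_iff.mp fun x hx => ?_)
      exact hd.le_bot (Subgroup.mem_inf.mpr ⟨hx, hMS hx⟩)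
    · exact ⟨i, le_antisymm hMS (Subgroup.subgroupOf_eq_top.mp h)⟩
  · right
    -- M ⊓ S i = ⊥ for all i
    have hMSi : ∀ i, M ⊓ S i = ⊥ := by
      intro i
      have hnor : (M ⊓ S i).Normal :=
        ⟨fun x hx g => Subgroup.mem_inf.mpr
          ⟨hM.conj_mem x (Subgroup.mem_inf.mp hx).1 g,
           (hS i).conj_mem x (Subgroup.mem_inf.mp hx).2 g⟩⟩
      rcases hmin (M ⊓ S i) hnor inf_le_left with h | h
      · exact h
      · exact absurd ⟨i, h ▸ inf_le_right⟩ hcase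
    -- M centralizes each S i
    have hMcomm : ∀ m ∈ M, ∀ i, ∀ x ∈ S i, m * x = x * m := by
      intro m hm i x hx
      have hc : m * x * m⁻¹ * x⁻¹ ∈ M ⊓ S i := by
        refine Subgroup.mem_inf.mpr ⟨?_, ?_⟩
        · have h1 : x * m⁻¹ * x⁻¹ ∈ M := hM.conj_mem m⁻¹ (inv_mem hm) x
          have h2 : m * (x * m⁻¹ * x⁻¹) ∈ M := mul_mem hm h1
          simpa [mul_assoc] using h2
        · have h1 : m * x * m⁻¹ ∈ S i := (hS i).conj_mem x hx m
          exact mul_mem h1 (inv_mem hx)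
      rw [hMSi i] at hc
      have h0 : m * x * m⁻¹ * x⁻¹ = 1 := Subgroup.mem_bot.mp hc
      have hxa : m * x = (m * x * m⁻¹ * x⁻¹) * (x * m) := by group
      rw [h0, one_mul] at hxa
      exact hxa
    -- M and A both centralize the direct sum
    have hMcent : M ≤ Subgroup.centralizer (⨆ i, S i : Subgroup Γ) := by
      intro m hm
      have hle : (⨆ i, S i) ≤ Subgroup.centralizer ({m} : Set Γ) := by
        refine iSup_le fun i x hx => ?_
        refine Subgroup.mem_centralizer_iff.mpr fun g hg => ?_
        rcases hg with rfl
        exact hMcomm _ hm i x hx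
      refine Subgroup.mem_centralizer_iff.mpr fun g hg => ?_
      exact (Subgroup.mem_centralizer_iff.mp (hle hg) m rfl).symm
    have hAcent : A ≤ Subgroup.centralizer (⨆ i, S i : Subgroup Γ) := by
      intro a ha
      have hle : (⨆ i, S i) ≤ Subgroup.centralizer ({a} : Set Γ) := by
        refine iSup_le fun i x hx => ?_
        refine Subgroup.mem_centralizer_iff.mpr fun g hg => ?_
        rcases hg with rfl
        exact (hSA_comm i x hx _ ha).symm
      refine Subgroup.mem_centralizer_iff.mpr fun g hg => ?_
      exact (Subgroup.mem_centralizer_iff.mp (hle hg) a rfl).symm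
    -- conclude
    intro m hm
    haveI := hA
    have hmtop : m ∈ A ⊔ (⨆ i, S i) := htop ▸ Subgroup.mem_top m
    have hmmul : m ∈ ((A : Set Γ) * ((⨆ i, S i : Subgroup Γ) : Set Γ)) := by
      rw [← Subgroup.normal_mul]; exact hmtop
    obtain ⟨a, ha, s, hsD, has⟩ := hmmul
    have hscent : s ∈ Subgroup.centralizer (⨆ i, S i : Subgroup Γ) := by
      have : s = a⁻¹ * m := by rw [← has]; group
      rw [this]
      exact mul_mem (inv_mem (hAcent ha)) (hMcent hm)
    obtain ⟨F, hF⟩ := hfin s hsD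
    have hs1 : s = 1 := hkey F s hF hscent
    have : m = a := by rw [← has, hs1]; simp
    rw [this]
    exact ha
end

section
/- Let Γ be a group. The minisocle MS(Γ), the subgroup generated by all finite minimal normal subgroups, decomposes as an internal direct product MS(Γ) = MA(Γ) × MH(Γ), where MA(Γ) is generated by the finite abelian minimal normal subgroups and MH(Γ) by the finite nonabelian ones. -/
/-- A foot of `Γ`: a minimal normal subgroup. -/
def IsFoot {Γ : Type*} [Group Γ] (M : Subgroup Γ) : Prop :=
  M.Normal ∧ M ≠ ⊥ ∧ ∀ K : Subgroup Γ, K.Normal → K ≤ M → K = ⊥ ∨ K = M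

/-- The subgroup `MA(Γ)` generated by the finite abelian feet. -/
def MA (Γ : Type*) [Group Γ] : Subgroup Γ :=
  ⨆ M ∈ {M : Subgroup Γ | IsFoot M ∧ Finite M ∧ ∀ a ∈ M, ∀ b ∈ M, a * b = b * a}, M

/-- The subgroup `MH(Γ)` generated by the finite nonabelian feet. -/
def MH (Γ : Type*) [Group Γ] : Subgroup Γ :=
  ⨆ M ∈ {M : Subgroup Γ | IsFoot M ∧ Finite M ∧ ∃ a ∈ M, ∃ b ∈ M, a * b ≠ b * a}, M

/-- The minisocle `MS(Γ)` generated by all finite feet. -/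
def MS (Γ : Type*) [Group Γ] : Subgroup Γ :=
  ⨆ M ∈ {M : Subgroup Γ | IsFoot M ∧ Finite M}, M

section Aux

open Pointwise

variable {Γ : Type*} [Group Γ]

/-- Distinct feet are disjoint. -/
lemma foot_disjoint {M N : Subgroup Γ} (hM : IsFoot M) (hN : IsFoot N) (hne : M ≠ N) :
    Disjoint M N := by
  have hinf : (M ⊓ N).Normal := by
    haveI := hM.1; haveI := hN.1; exact Subgroup.normal_inf_normal M N
  rcases hM.2.2 (M ⊓ N) hinf inf_le_left with h | h
  · exact disjoint_iff.mpr h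
  · -- then M ≤ N
    have hMN : M ≤ N := by rw [← h]; exact inf_le_right
    rcases hN.2.2 M hM.1 hMN with h' | h'
    · exact absurd h' hM.2.1
    · exact absurd h' hne

/-- Elements of distinct feet commute. -/
lemma foot_commute {M N : Subgroup Γ} (hM : IsFoot M) (hN : IsFoot N) (hne : M ≠ N)
    {a b : Γ} (ha : a ∈ M) (hb : b ∈ N) : Commute a b :=
  Subgroup.commute_of_normal_of_disjoint M N hM.1 hN.1 (foot_disjoint hM hN hne) a b ha hb

/-- For a nonabelian foot, the part of the centralizer inside it is trivial. -/
lemma foot_centralizer_inf {M : Subgroup Γ} (hM : IsFoot M)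
    (hna : ∃ a ∈ M, ∃ b ∈ M, a * b ≠ b * a) :
    Subgroup.centralizer (M : Set Γ) ⊓ M = ⊥ := by
  have hnormal : (Subgroup.centralizer (M : Set Γ) ⊓ M).Normal := by
    refine ⟨fun k hk g => ?_⟩
    rw [Subgroup.mem_inf] at hk ⊢
    obtain ⟨hk1, hk2⟩ := hk
    refine ⟨?_, hM.1.conj_mem k hk2 g⟩
    rw [Subgroup.mem_centralizer_iff]
    intro m hm
    have hm' : g⁻¹ * m * g ∈ M := by
      have := hM.1.conj_mem m hm g⁻¹
      simpa using this
    have h2 : (g⁻¹ * m * g) * k = k * (g⁻¹ * m * g) :=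
      (Subgroup.mem_centralizer_iff.mp hk1) _ hm'
    calc m * (g * k * g⁻¹) = g * ((g⁻¹ * m * g) * k) * g⁻¹ := by group
      _ = g * (k * (g⁻¹ * m * g)) * g⁻¹ := by rw [h2]
      _ = (g * k * g⁻¹) * m := by group
  rcases hM.2.2 _ hnormal inf_le_right with h | h
  · exact h
  · exfalso
    obtain ⟨a, ha, b, hb, hab⟩ := hna
    have : a ∈ Subgroup.centralizer (M : Set Γ) := by
      have h3 : a ∈ Subgroup.centralizer (M : Set Γ) ⊓ M := by rw [h]; exact ha
      exact h3.1
    exact hab ((Subgroup.mem_centralizer_iff.mp this b hb).symm)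

lemma MA_le_centralizer_MH : MA Γ ≤ Subgroup.centralizer (MH Γ : Set Γ) := by
  refine iSup₂_le fun M hM => ?_
  intro a ha
  rw [Subgroup.mem_centralizer_iff]
  intro b hb
  -- show MH ≤ centralizer of M
  have hMH : MH Γ ≤ Subgroup.centralizer (M : Set Γ) := by
    refine iSup₂_le fun N hN => ?_
    intro x hx
    rw [Subgroup.mem_centralizer_iff]
    intro m hm
    have hne : N ≠ M := by
      rintro rfl
      obtain ⟨p, hp, q, hq, hpq⟩ := hN.2.2
      exact hpq (hM.2.2 p hp q hq)
    exact (foot_commute hN.1 hM.1 hne hx hm).symm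
  exact (Subgroup.mem_centralizer_iff.mp (hMH hb) a ha).symm

lemma MH_trivial_central (z : Γ) (hz : z ∈ MH Γ)
    (hc : z ∈ Subgroup.centralizer (MH Γ : Set Γ)) : z = 1 := by
  classical
  set S := {M : Subgroup Γ | IsFoot M ∧ Finite M ∧ ∃ a ∈ M, ∃ b ∈ M, a * b ≠ b * a} with hS
  have hMH : MH Γ = ⨆ M : S, (M : Subgroup Γ) := by
    rw [MH, iSup_subtype]
  have hfin : MH Γ = ⨆ T : Finset S, ⨆ M ∈ T, (M : Subgroup Γ) := by
    rw [hMH, iSup_eq_iSup_finset]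
  have hdir : Directed (· ≤ ·) (fun T : Finset S => ⨆ M ∈ T, (M : Subgroup Γ)) := by
    intro T₁ T₂
    refine ⟨T₁ ∪ T₂, ?_, ?_⟩ <;>
      exact iSup₂_le fun M hM => le_iSup₂_of_le M (by simp [hM]) le_rfl
  rw [hfin] at hz
  rw [Subgroup.mem_iSup_of_directed hdir] at hz
  obtain ⟨T, hzT⟩ := hz
  induction T using Finset.induction_on generalizing z with
  | empty => simpa using hzT
  | @insert M T' hMT ih =>
    rw [Finset.iSup_insert] at hzT
    set P := ⨆ N ∈ T', (N : Subgroup Γ) with hP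
    haveI : (M : Subgroup Γ).Normal := M.2.1.1
    have hPc : P ≤ Subgroup.centralizer ((M : Subgroup Γ) : Set Γ) := by
      refine iSup₂_le fun N hN => ?_
      intro x hx
      rw [Subgroup.mem_centralizer_iff]
      intro m hm
      have hne : (N : Subgroup Γ) ≠ (M : Subgroup Γ) := by
        intro h
        exact hMT (by rwa [show N = M from Subtype.ext h] at hN)
      exact (foot_commute N.2.1 M.2.1 hne hx hm).symm
    -- z ∈ M ⊔ P, so z = m * p
    have hzmem : z ∈ ((M : Subgroup Γ) : Set Γ) * (P : Set Γ) := by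
      rw [← Subgroup.normal_mul]
      exact_mod_cast hzT
    obtain ⟨m, hm, p, hp, rfl⟩ := hzmem
    have hMle : (M : Subgroup Γ) ≤ MH Γ :=
      le_iSup₂ (f := fun (N : Subgroup Γ) (_ : N ∈ S) => N) (M : Subgroup Γ) M.2
    have hzc : m * p ∈ Subgroup.centralizer ((M : Subgroup Γ) : Set Γ) :=
      Subgroup.centralizer_le (by exact_mod_cast hMle) hc
    have hpc : p ∈ Subgroup.centralizer ((M : Subgroup Γ) : Set Γ) := hPc hp
    have hmc : m ∈ Subgroup.centralizer ((M : Subgroup Γ) : Set Γ) := by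
      have : (m * p) * p⁻¹ ∈ Subgroup.centralizer ((M : Subgroup Γ) : Set Γ) :=
        mul_mem hzc (inv_mem hpc)
      simpa using this
    have hm1 : m = 1 := by
      have : m ∈ Subgroup.centralizer ((M : Subgroup Γ) : Set Γ) ⊓ (M : Subgroup Γ) :=
        ⟨hmc, hm⟩
      rw [foot_centralizer_inf M.2.1 M.2.2.2] at this
      exact this
    subst hm1
    have hc' : p ∈ Subgroup.centralizer (MH Γ : Set Γ) := by simpa using hc
    have hp' : p ∈ P := hp
    have : p = 1 := ih p hc' hp'
    simpa using this

end Aux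

/-- The minisocle decomposes as the internal direct product
`MS(Γ) = MA(Γ) × MH(Γ)`. -/
theorem MS_eq_MA_directProduct_MH (Γ : Type*) [Group Γ] :
    MA Γ ⊔ MH Γ = MS Γ ∧ Disjoint (MA Γ) (MH Γ) ∧
      ∀ a ∈ MA Γ, ∀ b ∈ MH Γ, Commute a b := by
  classical
  refine ⟨?_, ?_, ?_⟩
  · -- MA ⊔ MH = MS
    have hset : {M : Subgroup Γ | IsFoot M ∧ Finite M} =
        {M : Subgroup Γ | IsFoot M ∧ Finite M ∧ ∀ a ∈ M, ∀ b ∈ M, a * b = b * a} ∪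
        {M : Subgroup Γ | IsFoot M ∧ Finite M ∧ ∃ a ∈ M, ∃ b ∈ M, a * b ≠ b * a} := by
      ext M
      simp only [Set.mem_union, Set.mem_setOf_eq]
      constructor
      · rintro ⟨h1, h2⟩
        by_cases h : ∀ a ∈ M, ∀ b ∈ M, a * b = b * a
        · exact Or.inl ⟨h1, h2, h⟩
        · push_neg at h
          exact Or.inr ⟨h1, h2, h⟩
      · rintro (⟨h1, h2, _⟩ | ⟨h1, h2, _⟩) <;> exact ⟨h1, h2⟩
    rw [MA, MH, MS, hset, iSup_union]
  · -- Disjoint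
    rw [disjoint_iff_inf_le]
    rintro z ⟨hzA, hzH⟩
    have : z = 1 := MH_trivial_central z hzH (MA_le_centralizer_MH hzA)
    simp [this]
  · intro a ha b hb
    exact ((Subgroup.mem_centralizer_iff.mp (MA_le_centralizer_MH ha)) b hb).symm
end
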